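/- Under conditions (C1), (C2), (C3) as in the noncommutative Kepler setting, the components of the angular momentum L' = q'×p' satisfy, at every phase-space point where the conditions hold, the so(3) commutation relations {L'_i, L'_j}_nc = Σ_{h=1}^3 ε_{ijh} F'_{hh} L'_h for all i,j ∈ {1,2,3}, where ε_{ijh} is the Levi-Civita symbol and F'_{hh} = −F_{hh}. -/

import Mathlib

open scoped BigOperators

/-- Phase space ℝ⁶ = {(q, p)} with q, p : Fin 3 → ℝ. -/
abbrev PhaseSpace := (Fin 3 → ℝ) × (Fin 3 → ℝ)

/-- Partial derivative of `f` with respect to the position coordinate `q_ν`. -/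
noncomputable def pdQ (f : PhaseSpace → ℝ) (ν : Fin 3) (z : PhaseSpace) : ℝ :=
  fderiv ℝ f z (Pi.single ν 1, 0)

/-- Partial derivative of `f` with respect to the momentum coordinate `p_ν`. -/
noncomputable def pdP (f : PhaseSpace → ℝ) (ν : Fin 3) (z : PhaseSpace) : ℝ :=
  fderiv ℝ f z (0, Pi.single ν 1)

/-- Noncommutative Poisson bracket
`{f,g}_nc = Σ_ν θ_ν⁻¹ (∂f/∂p_ν ∂g/∂q_ν − ∂f/∂q_ν ∂g/∂p_ν)`. -/
noncomputable def ncBracket (θ : Fin 3 → ℝ) (f g : PhaseSpace → ℝ) (z : PhaseSpace) : ℝ :=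
  ∑ ν : Fin 3, (θ ν)⁻¹ * (pdP f ν z * pdQ g ν z - pdQ f ν z * pdP g ν z)

/-- Transformed position coordinate `q'_i = q_i − (1/2) Σ_j α_{ij} p_j`. -/
noncomputable def qNC (α : Matrix (Fin 3) (Fin 3) ℝ) (i : Fin 3) (z : PhaseSpace) : ℝ :=
  z.1 i - (1/2) * ∑ j : Fin 3, α i j * z.2 j

/-- Transformed momentum coordinate `p'_i = p_i + (1/2) Σ_j λ_{ij} q_j`. -/
noncomputable def pNC (lam : Matrix (Fin 3) (Fin 3) ℝ) (i : Fin 3) (z : PhaseSpace) : ℝ :=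
  z.2 i + (1/2) * ∑ j : Fin 3, lam i j * z.1 j

/-- `θ_ν = 1 + (1/4) Σ_μ λ_{μν} α_{μν}`. -/
noncomputable def θnc (α lam : Matrix (Fin 3) (Fin 3) ℝ) (ν : Fin 3) : ℝ :=
  1 + (1/4) * ∑ μ : Fin 3, lam μ ν * α μ ν

/-- `F_{ii} = θ_i⁻¹ + (1/4) Σ_j λ_{ij} α_{ij} θ_j⁻¹` and
`F_{ij} = (1/4) Σ_r λ_{ir} α_{jr} θ_r⁻¹` for `i ≠ j`. -/
noncomputable def Fnc (α lam : Matrix (Fin 3) (Fin 3) ℝ) (i j : Fin 3) : ℝ :=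
  if i = j then (θnc α lam i)⁻¹ + (1/4) * ∑ r : Fin 3, lam i r * α i r * (θnc α lam r)⁻¹
  else (1/4) * ∑ r : Fin 3, lam i r * α j r * (θnc α lam r)⁻¹

/-- Levi-Civita symbol `ε_{ijh} = (1/2)(i−j)(j−h)(h−i)`. -/
noncomputable def eps (i j h : Fin 3) : ℝ :=
  (1/2) * ((i.1 : ℝ) - (j.1 : ℝ)) * ((j.1 : ℝ) - (h.1 : ℝ)) * ((h.1 : ℝ) - (i.1 : ℝ))

/-- Angular momentum `L' = q' × p'`, componentwise `L'_i = Σ_{j,h} ε_{ijh} q'_j p'_h`. -/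
noncomputable def Lnc (α lam : Matrix (Fin 3) (Fin 3) ℝ) (i : Fin 3) (z : PhaseSpace) : ℝ :=
  ∑ j : Fin 3, ∑ h : Fin 3, eps i j h * qNC α j z * pNC lam h z

/-- `Y = (Σ_i (q'_i)²)^{1/2}`, the Euclidean norm of `q'`. -/
noncomputable def Ync (α : Matrix (Fin 3) (Fin 3) ℝ) (z : PhaseSpace) : ℝ :=
  Real.sqrt (∑ i : Fin 3, (qNC α i z) ^ 2)

/-- Noncommutative Kepler Hamiltonian `H' = (1/(2m)) Σ_i (p'_i)² − k/Y`. -/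
noncomputable def Hnc (α lam : Matrix (Fin 3) (Fin 3) ℝ) (m k : ℝ) (z : PhaseSpace) : ℝ :=
  (1 / (2 * m)) * ∑ i : Fin 3, (pNC lam i z) ^ 2 - k / Ync α z

/-- Laplace–Runge–Lenz vector `A' = p' × L' − mk q'/Y`. -/
noncomputable def Anc (α lam : Matrix (Fin 3) (Fin 3) ℝ) (m k : ℝ) (i : Fin 3)
    (z : PhaseSpace) : ℝ :=
  (∑ j : Fin 3, ∑ h : Fin 3, eps i j h * pNC lam j z * Lnc α lam h z)
    - m * k * qNC α i z / Ync α z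

/-- Condition (C1): `λ_{ij} θ_i = λ_{ji} θ_j` and `α_{ij} θ_i = α_{ji} θ_j` for all `i, j`. -/
def CondC1 (α lam : Matrix (Fin 3) (Fin 3) ℝ) : Prop :=
  ∀ i j : Fin 3, lam i j * θnc α lam i = lam j i * θnc α lam j ∧
    α i j * θnc α lam i = α j i * θnc α lam j

/-- Condition (C2), holding at the point `z`: for all `i, j, κ`,
`q'_i λ_{κj} θ_i = q'_j λ_{κi} θ_j`, `q'_i α_{κi} θ_j = −q'_j α_{κj} θ_i`,
`p'_i α_{κj} θ_i = p'_j α_{κi} θ_j`, `p'_i λ_{κi} θ_j = −p'_j λ_{κj} θ_i`. -/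
def CondC2 (α lam : Matrix (Fin 3) (Fin 3) ℝ) (z : PhaseSpace) : Prop :=
  ∀ i j κ : Fin 3,
    qNC α i z * lam κ j * θnc α lam i = qNC α j z * lam κ i * θnc α lam j ∧
    qNC α i z * α κ i * θnc α lam j = -(qNC α j z * α κ j * θnc α lam i) ∧
    pNC lam i z * α κ j * θnc α lam i = pNC lam j z * α κ i * θnc α lam j ∧
    pNC lam i z * lam κ i * θnc α lam j = -(pNC lam j z * lam κ j * θnc α lam i)

/-- Condition (C3): the matrix `F` is symmetric with `F_{11} = F_{22} = F_{33}`. -/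
def CondC3 (α lam : Matrix (Fin 3) (Fin 3) ℝ) : Prop :=
  (∀ i j : Fin 3, Fnc α lam i j = Fnc α lam j i) ∧
    Fnc α lam 0 0 = Fnc α lam 1 1 ∧ Fnc α lam 1 1 = Fnc α lam 2 2

/-- Scaled Runge–Lenz–Pauli vector on negative energies: `Γ̂'⁻ = A'/(−2mH')^{1/2}`. -/
noncomputable def GamMinus (α lam : Matrix (Fin 3) (Fin 3) ℝ) (m k : ℝ) (i : Fin 3)
    (z : PhaseSpace) : ℝ :=
  Anc α lam m k i z / Real.sqrt (-(2 * m * Hnc α lam m k z))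

/-- Scaled Runge–Lenz–Pauli vector on positive energies: `Γ̂'⁺ = A'/(2mH')^{1/2}`. -/
noncomputable def GamPlus (α lam : Matrix (Fin 3) (Fin 3) ℝ) (m k : ℝ) (i : Fin 3)
    (z : PhaseSpace) : ℝ :=
  Anc α lam m k i z / Real.sqrt (2 * m * Hnc α lam m k z)

/-!
The bracket `{·,·}_nc` is a biderivation, and the shifted coordinates satisfy
`{q'_a, q'_b} = {p'_a, p'_b} = 0` (this is (C1)) and `{p'_a, q'_b} = F_{ab}`. By Leibniz' rule,
`{q'_a p'_b, q'_c p'_d} = q'_a p'_d F_{bc} - q'_c p'_b F_{da}`.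

Taking `κ = i` or `κ = j` in (C2) gives `q'_a λ_{ab} = p'_a α_{ab} = 0`. An off-diagonal entry
`F_{bc}` only involves `λ_{br} α_{cr}` with `r` the third index, so `q'_a p'_d F_{bc}` vanishes
unless `a = c` and `d = b`, and in that case the two off-diagonal terms above cancel. What remains
is the classical `so(3)` computation for `q' × p'`, with `{q'_a, p'_b} = -δ_{ab} F_{aa}`.
-/

theorem ncBracket_comm (θ : Fin 3 → ℝ) (f g : PhaseSpace → ℝ) (z : PhaseSpace) :
    ncBracket θ f g z = -ncBracket θ g f z := by
  simp only [ncBracket, ← Finset.sum_neg_distrib]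
  exact Finset.sum_congr rfl fun ν _ => by ring

section Bracket

variable {θ : Fin 3 → ℝ} {f g h : PhaseSpace → ℝ} {z : PhaseSpace}

theorem ncBracket_mul_left (hf : DifferentiableAt ℝ f z) (hg : DifferentiableAt ℝ g z) :
    ncBracket θ (fun y => f y * g y) h z
      = f z * ncBracket θ g h z + g z * ncBracket θ f h z := by
  simp only [ncBracket, pdP, pdQ, fderiv_fun_mul hf hg, Finset.mul_sum, ← Finset.sum_add_distrib,
    add_apply, smul_apply, smul_eq_mul]
  exact Finset.sum_congr rfl fun ν _ => by ring

theorem ncBracket_mul_right (hg : DifferentiableAt ℝ g z) (hh : DifferentiableAt ℝ h z) :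
    ncBracket θ f (fun y => g y * h y) z
      = g z * ncBracket θ f h z + h z * ncBracket θ f g z := by
  rw [ncBracket_comm, ncBracket_mul_left hg hh, ncBracket_comm θ h, ncBracket_comm θ g]
  ring

theorem ncBracket_const_mul_left (hf : DifferentiableAt ℝ f z) (c : ℝ) :
    ncBracket θ (fun y => c * f y) g z = c * ncBracket θ f g z := by
  simp only [ncBracket, pdP, pdQ, fderiv_const_mul hf, Finset.mul_sum,
    smul_apply, smul_eq_mul]
  exact Finset.sum_congr rfl fun ν _ => by ring

theorem ncBracket_const_mul_right (hg : DifferentiableAt ℝ g z) (c : ℝ) :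
    ncBracket θ f (fun y => c * g y) z = c * ncBracket θ f g z := by
  rw [ncBracket_comm, ncBracket_const_mul_left hg, ncBracket_comm θ g, mul_neg, neg_neg]

theorem ncBracket_sum_left {ι : Type*} {s : Finset ι} {F : ι → PhaseSpace → ℝ}
    (hF : ∀ i ∈ s, DifferentiableAt ℝ (F i) z) :
    ncBracket θ (fun y => ∑ i ∈ s, F i y) g z = ∑ i ∈ s, ncBracket θ (F i) g z := by
  simp only [ncBracket, pdP, pdQ, fderiv_fun_sum hF, sum_apply,
    Finset.sum_mul, Finset.mul_sum, ← Finset.sum_sub_distrib]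
  exact Finset.sum_comm

theorem ncBracket_sum_right {ι : Type*} {s : Finset ι} {G : ι → PhaseSpace → ℝ}
    (hG : ∀ i ∈ s, DifferentiableAt ℝ (G i) z) :
    ncBracket θ f (fun y => ∑ i ∈ s, G i y) z = ∑ i ∈ s, ncBracket θ f (G i) z := by
  rw [ncBracket_comm, ncBracket_sum_left hG, ← Finset.sum_neg_distrib]
  exact Finset.sum_congr rfl fun i _ => (ncBracket_comm θ f (G i) z).symm

end Bracket

theorem fderiv_apply_of_isLinearMap {𝕜 E F : Type*} [NontriviallyNormedField 𝕜]
    [CompleteSpace 𝕜] [NormedAddCommGroup E] [NormedSpace 𝕜 E] [FiniteDimensional 𝕜 E]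
    [NormedAddCommGroup F] [NormedSpace 𝕜 F] {f : E → F} (hf : IsLinearMap 𝕜 f) (z v : E) :
    fderiv 𝕜 f z v = f v := by
  have hL := (LinearMap.toContinuousLinearMap (hf.mk' f)).fderiv (x := z)
  rw [LinearMap.coe_toContinuousLinearMap'] at hL
  exact DFunLike.congr_fun hL v

section Coordinates

variable (α lam : Matrix (Fin 3) (Fin 3) ℝ) (a ν : Fin 3) (z : PhaseSpace)

theorem isLinearMap_qNC : IsLinearMap ℝ (qNC α a) where
  map_add x y := by
    simp only [qNC, Prod.fst_add, Prod.snd_add, Pi.add_apply, mul_add, Finset.sum_add_distrib]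
    ring
  map_smul c x := by
    simp only [qNC, Prod.smul_fst, Prod.smul_snd, Pi.smul_apply, smul_eq_mul, Finset.mul_sum]
    rw [mul_sub, Finset.mul_sum]
    exact congrArg _ (Finset.sum_congr rfl fun j _ => by ring)

theorem isLinearMap_pNC : IsLinearMap ℝ (pNC lam a) where
  map_add x y := by
    simp only [pNC, Prod.fst_add, Prod.snd_add, Pi.add_apply, mul_add, Finset.sum_add_distrib]
    ring
  map_smul c x := by
    simp only [pNC, Prod.smul_fst, Prod.smul_snd, Pi.smul_apply, smul_eq_mul, Finset.mul_sum]
    rw [mul_add, Finset.mul_sum]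
    exact congrArg _ (Finset.sum_congr rfl fun j _ => by ring)

@[fun_prop]
theorem differentiable_qNC : Differentiable ℝ (qNC α a) := by
  unfold qNC; fun_prop

@[fun_prop]
theorem differentiable_pNC : Differentiable ℝ (pNC lam a) := by
  unfold pNC; fun_prop

theorem pdQ_qNC : pdQ (qNC α a) ν z = if a = ν then 1 else 0 := by
  simp [pdQ, fderiv_apply_of_isLinearMap (isLinearMap_qNC α a), qNC, Pi.single_apply]

theorem pdP_qNC : pdP (qNC α a) ν z = -(1 / 2) * α a ν := by
  simp [pdP, fderiv_apply_of_isLinearMap (isLinearMap_qNC α a), qNC, Pi.single_apply]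

theorem pdQ_pNC : pdQ (pNC lam a) ν z = (1 / 2) * lam a ν := by
  simp [pdQ, fderiv_apply_of_isLinearMap (isLinearMap_pNC lam a), pNC, Pi.single_apply]

theorem pdP_pNC : pdP (pNC lam a) ν z = if a = ν then 1 else 0 := by
  simp [pdP, fderiv_apply_of_isLinearMap (isLinearMap_pNC lam a), pNC, Pi.single_apply]

end Coordinates

section FundamentalBrackets

variable (α lam : Matrix (Fin 3) (Fin 3) ℝ) (θ : Fin 3 → ℝ) (a b : Fin 3) (z : PhaseSpace)

theorem ncBracket_qNC_qNC :
    ncBracket θ (qNC α a) (qNC α b) z = (α b a * (θ a)⁻¹ - α a b * (θ b)⁻¹) / 2 := by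
  simp only [ncBracket, pdP_qNC, pdQ_qNC, mul_ite, ite_mul, mul_one, mul_zero, zero_mul, one_mul,
    mul_sub, Finset.sum_sub_distrib, Finset.sum_ite_eq, Finset.mem_univ, if_true]
  ring

theorem ncBracket_pNC_pNC :
    ncBracket θ (pNC lam a) (pNC lam b) z
      = (lam b a * (θ a)⁻¹ - lam a b * (θ b)⁻¹) / 2 := by
  simp only [ncBracket, pdP_pNC, pdQ_pNC, mul_ite, ite_mul, mul_one, mul_zero, zero_mul, one_mul,
    mul_sub, Finset.sum_sub_distrib, Finset.sum_ite_eq, Finset.mem_univ, if_true]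
  ring

theorem ncBracket_pNC_qNC : ncBracket (θnc α lam) (pNC lam a) (qNC α b) z = Fnc α lam a b := by
  set θ := θnc α lam
  calc ncBracket θ (pNC lam a) (qNC α b) z
      = ∑ ν, ((if a = ν then if b = ν then (θ ν)⁻¹ else 0 else 0)
          + 1 / 4 * (lam a ν * α b ν * (θ ν)⁻¹)) := by
        simp only [ncBracket, pdP_pNC, pdQ_pNC, pdP_qNC, pdQ_qNC]
        exact Finset.sum_congr rfl fun ν _ => by split_ifs <;> ring
    _ = (if a = b then (θ a)⁻¹ else 0) + 1 / 4 * ∑ ν, lam a ν * α b ν * (θ ν)⁻¹ := by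
        rw [Finset.sum_add_distrib, Finset.sum_ite_eq, ← Finset.mul_sum]
        simp only [Finset.mem_univ, if_true, eq_comm]
    _ = Fnc α lam a b := by
        unfold Fnc
        split_ifs with hab
        · rw [hab]
        · rw [zero_add]

end FundamentalBrackets

theorem inv_mul_sub_inv_mul_eq_zero {K : Type*} [Field K] {x y s t : K} (hs : s ≠ 0)
    (ht : t ≠ 0) (h : x * s = y * t) : y * s⁻¹ - x * t⁻¹ = 0 := by
  field_simp
  linear_combination -h

section Conditions

variable {α lam : Matrix (Fin 3) (Fin 3) ℝ} {z : PhaseSpace}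

theorem CondC1.ncBracket_qNC_qNC_eq_zero (h1 : CondC1 α lam) (hθ : ∀ ν, θnc α lam ν ≠ 0)
    (a b : Fin 3) :
    ncBracket (θnc α lam) (qNC α a) (qNC α b) z = 0 := by
  rw [ncBracket_qNC_qNC, inv_mul_sub_inv_mul_eq_zero (hθ a) (hθ b) (h1 a b).2, zero_div]

theorem CondC1.ncBracket_pNC_pNC_eq_zero (h1 : CondC1 α lam) (hθ : ∀ ν, θnc α lam ν ≠ 0)
    (a b : Fin 3) :
    ncBracket (θnc α lam) (pNC lam a) (pNC lam b) z = 0 := by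
  rw [ncBracket_pNC_pNC, inv_mul_sub_inv_mul_eq_zero (hθ a) (hθ b) (h1 a b).1, zero_div]

theorem CondC1.ncBracket_qNC_mul_pNC (h1 : CondC1 α lam) (hθ : ∀ ν, θnc α lam ν ≠ 0)
    (a b c d : Fin 3) :
    ncBracket (θnc α lam) (fun y => qNC α a y * pNC lam b y)
        (fun y => qNC α c y * pNC lam d y) z
      = qNC α a z * pNC lam d z * Fnc α lam b c - qNC α c z * pNC lam b z * Fnc α lam d a := by
  have hq : ∀ k, DifferentiableAt ℝ (qNC α k) z := fun k => by fun_prop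
  have hp : ∀ k, DifferentiableAt ℝ (pNC lam k) z := fun k => by fun_prop
  rw [ncBracket_mul_left (hq a) (hp b), ncBracket_mul_right (hq c) (hp d),
    ncBracket_mul_right (hq c) (hp d), h1.ncBracket_qNC_qNC_eq_zero hθ,
    h1.ncBracket_pNC_pNC_eq_zero hθ, ncBracket_pNC_qNC, ncBracket_comm _ (qNC α a),
    ncBracket_pNC_qNC]
  ring

theorem diag_eq_zero_of_antisymm {n : Type*} {A : Matrix n n ℝ} (hA : ∀ i j, A j i = -A i j)
    (i : n) : A i i = 0 := by
  linarith [hA i i]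

theorem CondC2.qNC_mul_lam_eq_zero (h2 : CondC2 α lam z) (hθ : ∀ ν, θnc α lam ν ≠ 0)
    (hlam : ∀ i j, lam j i = -lam i j) {a b r : Fin 3} (ha : a = b ∨ a = r) :
    qNC α a z * lam b r = 0 := by
  have key : ∀ i j, qNC α i z * lam i j = 0 := fun i j => by
    have h := (h2 j i i).1
    rw [diag_eq_zero_of_antisymm hlam, mul_zero, zero_mul, eq_comm, mul_eq_zero] at h
    exact h.resolve_right (hθ i)
  rcases ha with rfl | rfl
  · exact key a r
  · rw [hlam, mul_neg, key, neg_zero]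

theorem CondC2.pNC_mul_α_eq_zero (h2 : CondC2 α lam z) (hθ : ∀ ν, θnc α lam ν ≠ 0)
    (hα : ∀ i j, α j i = -α i j) {d c r : Fin 3} (hd : d = c ∨ d = r) :
    pNC lam d z * α c r = 0 := by
  have key : ∀ i j, pNC lam i z * α i j = 0 := fun i j => by
    have h := (h2 i j i).2.2.1
    rw [diag_eq_zero_of_antisymm hα, mul_zero, zero_mul, mul_eq_zero] at h
    exact h.resolve_right (hθ i)
  rcases hd with rfl | rfl
  · exact key d r
  · rw [hα, mul_neg, key, neg_zero]

theorem CondC2.qNC_mul_pNC_mul_Fnc_eq_zero (h2 : CondC2 α lam z) (hθ : ∀ ν, θnc α lam ν ≠ 0)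
    (hα : ∀ i j, α j i = -α i j) (hlam : ∀ i j, lam j i = -lam i j) {a b c d : Fin 3}
    (hbc : b ≠ c) (h : ¬(a = c ∧ d = b)) :
    qNC α a z * pNC lam d z * Fnc α lam b c = 0 := by
  have key : ∀ r, qNC α a z * lam b r * (pNC lam d z * α c r) = 0 := fun r => by
    by_cases hrb : r = b
    · rw [hrb, diag_eq_zero_of_antisymm hlam, mul_zero, zero_mul]
    by_cases hrc : r = c
    · rw [hrc, diag_eq_zero_of_antisymm hα, mul_zero, mul_zero]
    by_cases ha : a = b ∨ a = r
    · rw [h2.qNC_mul_lam_eq_zero hθ hlam ha, zero_mul]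
    by_cases hd : d = c ∨ d = r
    · rw [h2.pNC_mul_α_eq_zero hθ hα hd, mul_zero]
    -- `{b, c, r}` is all of `Fin 3`, which forces `a = c` and `d = b`
    exfalso
    omega
  rw [Fnc, if_neg hbc, Finset.mul_sum, Finset.mul_sum]
  refine Finset.sum_eq_zero fun r _ => ?_
  linear_combination (1 / 4 * (θnc α lam r)⁻¹) * key r

theorem CondC2.qNC_mul_pNC_mul_Fnc_sub_eq_diag (h2 : CondC2 α lam z) (hθ : ∀ ν, θnc α lam ν ≠ 0)
    (hα : ∀ i j, α j i = -α i j) (hlam : ∀ i j, lam j i = -lam i j) (a b c d : Fin 3) :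
    qNC α a z * pNC lam d z * Fnc α lam b c - qNC α c z * pNC lam b z * Fnc α lam d a
      = (if b = c then qNC α a z * pNC lam d z * Fnc α lam b b else 0)
        - (if d = a then qNC α c z * pNC lam b z * Fnc α lam a a else 0) := by
  by_cases hx : a = c ∧ d = b
  · obtain ⟨rfl, rfl⟩ := hx
    rw [sub_self]
    split_ifs with hda
    · rw [hda, sub_self]
    · rw [sub_self]
  have e1 : qNC α a z * pNC lam d z * Fnc α lam b c
      = if b = c then qNC α a z * pNC lam d z * Fnc α lam b b else 0 := by
    split_ifs with hbc
    · rw [hbc]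
    · exact h2.qNC_mul_pNC_mul_Fnc_eq_zero hθ hα hlam hbc hx
  have e2 : qNC α c z * pNC lam b z * Fnc α lam d a
      = if d = a then qNC α c z * pNC lam b z * Fnc α lam a a else 0 := by
    split_ifs with hda
    · rw [hda]
    · exact h2.qNC_mul_pNC_mul_Fnc_eq_zero hθ hα hlam hda fun h => hx ⟨h.1.symm, h.2.symm⟩
  rw [e1, e2]

end Conditions

theorem ncBracket_Lnc_Lnc (α lam : Matrix (Fin 3) (Fin 3) ℝ) (θ : Fin 3 → ℝ) (i j : Fin 3)
    (z : PhaseSpace) :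
    ncBracket θ (Lnc α lam i) (Lnc α lam j) z
      = ∑ a, ∑ b, eps i a b * ∑ c, ∑ d, eps j c d *
          ncBracket θ (fun y => qNC α a y * pNC lam b y)
            (fun y => qNC α c y * pNC lam d y) z := by
  have hL : ∀ k, Lnc α lam k = fun y => ∑ a, ∑ b, eps k a b * (qNC α a y * pNC lam b y) :=
    fun k => funext fun y => by simp only [Lnc, mul_assoc]
  rw [hL i, hL j, ncBracket_sum_left fun a _ => by fun_prop]
  refine Finset.sum_congr rfl fun a _ => ?_
  rw [ncBracket_sum_left fun b _ => by fun_prop]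
  refine Finset.sum_congr rfl fun b _ => ?_
  rw [ncBracket_const_mul_left (by fun_prop)]
  simp (disch := intros; fun_prop) only [ncBracket_sum_right, ncBracket_const_mul_right]

theorem sum_eps_mul_sum_eps_mul_diag (f q p : Fin 3 → ℝ) (i j : Fin 3) :
    ∑ a, ∑ b, eps i a b * ∑ c, ∑ d, eps j c d *
        ((if b = c then q a * p d * f b else 0) - (if d = a then q c * p b * f a else 0))
      = ∑ h, eps i j h * -f h * ∑ k, ∑ l, eps h k l * q k * p l := by
  fin_cases i <;> fin_cases j <;> simp [Fin.sum_univ_three, eps] <;> ring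

theorem stmt5_general (α lam : Matrix (Fin 3) (Fin 3) ℝ)
    (hα : ∀ i j, α j i = - α i j) (hlam : ∀ i j, lam j i = - lam i j)
    (hθ : ∀ ν, θnc α lam ν ≠ 0)
    (h1 : CondC1 α lam) :
    ∀ z : PhaseSpace, CondC2 α lam z →
      ∀ i j : Fin 3,
        ncBracket (θnc α lam) (Lnc α lam i) (Lnc α lam j) z
          = ∑ h : Fin 3, eps i j h * (-(Fnc α lam h h)) * Lnc α lam h z := by
  intro z h2 i j
  rw [ncBracket_Lnc_Lnc]
  simp only [h1.ncBracket_qNC_mul_pNC hθ, h2.qNC_mul_pNC_mul_Fnc_sub_eq_diag hθ hα hlam, Lnc]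
  exact sum_eps_mul_sum_eps_mul_diag (fun h => Fnc α lam h h) (qNC α · z) (pNC lam · z) i j

/-- Under conditions (C1), (C2), (C3), the angular momentum components satisfy the
`so(3)` commutation relations `{L'_i, L'_j}_nc = Σ_h ε_{ijh} F'_{hh} L'_h`
with `F'_{hh} = −F_{hh}`. -/
theorem stmt5 (α lam : Matrix (Fin 3) (Fin 3) ℝ)
    (hα : ∀ i j, α j i = - α i j) (hlam : ∀ i j, lam j i = - lam i j)
    (hθ : ∀ ν, θnc α lam ν ≠ 0)
    (h1 : CondC1 α lam) (h3 : CondC3 α lam) :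
    ∀ z : PhaseSpace, CondC2 α lam z →
      ∀ i j : Fin 3,
        ncBracket (θnc α lam) (Lnc α lam i) (Lnc α lam j) z
          = ∑ h : Fin 3, eps i j h * (-(Fnc α lam h h)) * Lnc α lam h z :=
  stmt5_general α lam hα hlam hθ h1
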